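/- For real symmetric positive semi-definite matrices A and B, tr(A + B − 2(A^{1/2} B A^{1/2})^{1/2}) ≤ ‖A^{1/2} − B^{1/2}‖_F², where ‖·‖_F is the Frobenius norm. -/

import Mathlib

open Classical Matrix

/-- The positive semidefinite square root of a real matrix (junk value `0` if not PSD). -/
noncomputable def psdSqrt {n : ℕ} (A : Matrix (Fin n) (Fin n) ℝ) : Matrix (Fin n) (Fin n) ℝ :=
  if h : A.PosSemidef then
    (h.1.eigenvectorUnitary : Matrix (Fin n) (Fin n) ℝ) *
      diagonal ((↑) ∘ (h.1.eigenvalues · |>.sqrt)) *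
      (star h.1.eigenvectorUnitary : Matrix (Fin n) (Fin n) ℝ)
  else 0

/-- The Frobenius norm of a square real matrix. -/
noncomputable def frobNorm {n : ℕ} (M : Matrix (Fin n) (Fin n) ℝ) : ℝ :=
  Real.sqrt (Mᵀ * M).trace

/-!
Put `M = A^{1/2} B^{1/2}`. Then `A^{1/2} B A^{1/2} = M Mᵀ` and
`‖A^{1/2} − B^{1/2}‖_F² = tr A + tr B − 2 tr M`, so the claim is `tr M ≤ tr (M Mᵀ)^{1/2}`.
Conjugating by an orthogonal `U` with `M Mᵀ = U D Uᵀ` turns `M` into `N` with `N Nᵀ = D`,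
and then `N_ii ≤ √((N Nᵀ)_ii) = √(d_i)` for every `i`.
-/

open scoped MatrixOrder

namespace Matrix

variable {ι : Type*} [Fintype ι]

lemma posSemidef_self_mul_transpose (M : Matrix ι ι ℝ) : (M * Mᵀ).PosSemidef := by
  simpa [conjTranspose_eq_transpose_of_trivial] using posSemidef_self_mul_conjTranspose M

lemma sq_diag_le_diag_mul_transpose (N : Matrix ι ι ℝ) (i : ι) : N i i ^ 2 ≤ (N * Nᵀ) i i := by
  simp only [mul_apply, transpose_apply, ← sq]
  exact Finset.single_le_sum (fun j _ ↦ sq_nonneg (N i j)) (Finset.mem_univ i)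

lemma trace_le_sum_sqrt_diag_mul_transpose (N : Matrix ι ι ℝ) :
    N.trace ≤ ∑ i, √((N * Nᵀ) i i) :=
  Finset.sum_le_sum fun i _ ↦ Real.le_sqrt_of_sq_le (sq_diag_le_diag_mul_transpose N i)

end Matrix

section

variable {n : ℕ} {A : Matrix (Fin n) (Fin n) ℝ}

lemma psdSqrt_eq_cfcSqrt (hA : A.PosSemidef) : psdSqrt A = CFC.sqrt A := by
  rw [CFC.sqrt_eq_real_sqrt A hA.nonneg, cfcₙ_eq_cfc, hA.1.cfc_eq, psdSqrt, dif_pos hA]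
  rfl

lemma psdSqrt_mul_self (hA : A.PosSemidef) : psdSqrt A * psdSqrt A = A := by
  rw [psdSqrt_eq_cfcSqrt hA, CFC.sqrt_mul_sqrt_self A hA.nonneg]

lemma transpose_psdSqrt (hA : A.PosSemidef) : (psdSqrt A)ᵀ = psdSqrt A := by
  rw [psdSqrt_eq_cfcSqrt hA, ← conjTranspose_eq_transpose_of_trivial]
  exact (CFC.sqrt_nonneg A).posSemidef.1

lemma trace_psdSqrt (hA : A.PosSemidef) : (psdSqrt A).trace = ∑ i, √(hA.1.eigenvalues i) := by
  rw [psdSqrt, dif_pos hA, trace_mul_cycle, Unitary.coe_star_mul_self, one_mul, trace_diagonal]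
  rfl

lemma trace_le_trace_psdSqrt_mul_transpose (M : Matrix (Fin n) (Fin n) ℝ) :
    M.trace ≤ (psdSqrt (M * Mᵀ)).trace := by
  have hP := posSemidef_self_mul_transpose M
  set U : Matrix (Fin n) (Fin n) ℝ := (hP.1.eigenvectorUnitary : Matrix (Fin n) (Fin n) ℝ)
  have hUU : U * star U = 1 := Unitary.mul_star_self_of_mem hP.1.eigenvectorUnitary.2
  set N := star U * M * U
  have htrace : N.trace = M.trace := by
    rw [trace_mul_cycle, hUU, one_mul]
  have hdiag : N * Nᵀ = diagonal hP.1.eigenvalues := by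
    have hU := hP.1.conjStarAlgAut_star_eigenvectorUnitary
    simp only [Unitary.conjStarAlgAut_apply, Unitary.coe_star, star_star] at hU
    have hNT : Nᵀ = star U * Mᵀ * U := by
      simp only [N, ← conjTranspose_eq_transpose_of_trivial, conjTranspose_mul,
        star_eq_conjTranspose, conjTranspose_conjTranspose, mul_assoc]
    calc N * Nᵀ = star U * M * (U * star U) * Mᵀ * U := by rw [hNT]; simp only [N, mul_assoc]
      _ = _ := by rw [hUU, mul_one, mul_assoc (star U) M, hU]; rfl
  calc M.trace = N.trace := htrace.symm
    _ ≤ ∑ i, √((N * Nᵀ) i i) := N.trace_le_sum_sqrt_diag_mul_transpose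
    _ = (psdSqrt (M * Mᵀ)).trace := by simp [hdiag, trace_psdSqrt hP]

lemma frobNorm_sq (M : Matrix (Fin n) (Fin n) ℝ) : frobNorm M ^ 2 = (Mᵀ * M).trace :=
  Real.sq_sqrt <| by simpa using (posSemidef_self_mul_transpose Mᵀ).trace_nonneg

lemma frobNorm_sub_sq (X Y : Matrix (Fin n) (Fin n) ℝ) :
    frobNorm (X - Y) ^ 2 = frobNorm X ^ 2 + frobNorm Y ^ 2 - 2 * (Xᵀ * Y).trace := by
  have hcross : (Yᵀ * X).trace = (Xᵀ * Y).trace := by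
    rw [← trace_transpose, transpose_mul, transpose_transpose]
  simp only [frobNorm_sq, transpose_sub, sub_mul, mul_sub, trace_sub, hcross]
  ring

lemma frobNorm_psdSqrt_sq (hA : A.PosSemidef) : frobNorm (psdSqrt A) ^ 2 = A.trace := by
  rw [frobNorm_sq, transpose_psdSqrt hA, psdSqrt_mul_self hA]

end

/-- For real symmetric PSD matrices `A`, `B`:
`tr(A + B − 2 (A^{1/2} B A^{1/2})^{1/2}) ≤ ‖A^{1/2} − B^{1/2}‖_F²`. -/
theorem bures_le_frobenius_sq {n : ℕ}
    (A B : Matrix (Fin n) (Fin n) ℝ) (hA : A.PosSemidef) (hB : B.PosSemidef) :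
    (A + B - (2 : ℝ) • psdSqrt (psdSqrt A * B * psdSqrt A)).trace
      ≤ frobNorm (psdSqrt A - psdSqrt B) ^ 2 := by
  set M := psdSqrt A * psdSqrt B
  have hM : psdSqrt A * B * psdSqrt A = M * Mᵀ := by
    rw [transpose_mul, transpose_psdSqrt hA, transpose_psdSqrt hB]
    conv_lhs => rw [← psdSqrt_mul_self hB]
    simp only [M, mul_assoc]
  rw [frobNorm_sub_sq, frobNorm_psdSqrt_sq hA, frobNorm_psdSqrt_sq hB, transpose_psdSqrt hA, hM,
    trace_sub, trace_add, trace_smul, smul_eq_mul]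
  linarith [trace_le_trace_psdSqrt_mul_transpose M]
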